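/- arXiv:1706.06058 — 2 statements merged into one kernel-verified Lean document; each statement's English description precedes it below -/
import Mathlib

section
/- Let d > 0 and let p : ℝⁿ×ℝⁿ → ℂ be smooth with |∂_x^β ∂_ξ^α p(x,ξ)| ≤ C_{α,β} ⟨ξ⟩^{d-|α|} for all multi-indices α, β and all (x,ξ). Assume moreover that there is c > 0 such that |p(x,ξ) + iτ| ≥ c (⟨ξ⟩^d + |τ|) for all (x,ξ,τ). Then the function (p(x,ξ)+iτ)^{-1} belongs to the anisotropic symbol class S^{-d,d}_{1,0}: for all multi-indices α, β ∈ ℕⁿ and all j ∈ ℕ there exists C such that |∂_x^β ∂_ξ^α ∂_τ^j ( (p(x,ξ)+iτ)^{-1} )| ≤ C (⟨ξ⟩^{d-|α|} + {ξ,τ}^{d-|α|}) {ξ,τ}^{-2d-dj} for all (x,ξ,τ). -/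
/-!
Write `q = p + iτ` and `r = q⁻¹`. Ellipticity gives `|q| ≥ c {ξ,τ}^d`, hence `|r| ≲ {ξ,τ}^{-d}`.
Differentiating `q r = 1` with the Leibniz rule expresses `q ∂^L r` through the products
`∂^S q ∂^{L∖S} r` with `S ≠ ∅`, and the derivatives of `q` are very simple: without `τ`-directions
`∂^S q` is a derivative of `p`, of size `⟨ξ⟩^{d-|α_S|}`; `∂_τ q = i`; every other derivative
vanishes. Induction on the number of derivatives then gives
`|∂^L r| ≲ ⟨ξ⟩^{-|α|} {ξ,τ}^{-d(j+1)}`, with an extra factor `(⟨ξ⟩/{ξ,τ})^d` as soon as `L`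
contains an `x`- or `ξ`-direction; since `⟨ξ⟩ ≤ {ξ,τ}`, this is the estimate of `S^{-d,d}_{1,0}`.
-/

/-- Iterated directional derivative: `dLine [v₁, …, v_k] f = ∂_{v₁} ⋯ ∂_{v_k} f`. -/
noncomputable def dLine {E F : Type*} [NormedAddCommGroup E] [NormedSpace ℝ E]
    [NormedAddCommGroup F] [NormedSpace ℝ F] :
    List E → (E → F) → (E → F)
  | [], f => f
  | v :: L, f => fun x => fderiv ℝ (dLine L f) x v

/-- `⟨ξ⟩ = (1 + |ξ|²)^{1/2}`. -/
noncomputable def jap {n : ℕ} (ξ : EuclideanSpace ℝ (Fin n)) : ℝ :=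
  (1 + ‖ξ‖ ^ 2) ^ ((1 : ℝ) / 2)

/-- `{ξ,τ} = (⟨ξ⟩^{2d} + τ²)^{1/(2d)}`. -/
noncomputable def kap {n : ℕ} (d : ℝ) (ξ : EuclideanSpace ℝ (Fin n)) (τ : ℝ) : ℝ :=
  (jap ξ ^ (2 * d) + τ ^ 2) ^ (1 / (2 * d))

/-- The anisotropic symbol class `S^{m,ν}_{1,0}` (order `m`, regularity number `ν`,
anisotropy `d`): a smooth function `h(x,ξ,τ)` such that for every multi-index of
`x`-derivatives (encoded as a list `B` of coordinate directions), every multi-index of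
`ξ`-derivatives (encoded as a list `A`, with `|α| = A.length`) and every number `j` of
`τ`-derivatives, `|∂_x^β ∂_ξ^α ∂_τ^j h| ≤ C (⟨ξ⟩^{ν-|α|} + {ξ,τ}^{ν-|α|}) {ξ,τ}^{m-ν-dj}`. -/
def IsAnisoSymbol (n : ℕ) (d m ν : ℝ)
    (h : EuclideanSpace ℝ (Fin n) × EuclideanSpace ℝ (Fin n) × ℝ → ℂ) : Prop :=
  ContDiff ℝ (⊤ : ℕ∞) h ∧
    ∀ (B A : List (Fin n)) (j : ℕ), ∃ C : ℝ, ∀ (x ξ : EuclideanSpace ℝ (Fin n)) (τ : ℝ),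
      ‖dLine
          (B.map (fun i => ((EuclideanSpace.single i 1 : EuclideanSpace ℝ (Fin n)),
              (0 : EuclideanSpace ℝ (Fin n)), (0 : ℝ)))
            ++ A.map (fun i => ((0 : EuclideanSpace ℝ (Fin n)),
              (EuclideanSpace.single i 1 : EuclideanSpace ℝ (Fin n)), (0 : ℝ)))
            ++ List.replicate j ((0 : EuclideanSpace ℝ (Fin n)),
              (0 : EuclideanSpace ℝ (Fin n)), (1 : ℝ)))
          h (x, ξ, τ)‖
        ≤ C * ((jap ξ ^ (ν - (A.length : ℝ)) + kap d ξ τ ^ (ν - (A.length : ℝ)))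
            * kap d ξ τ ^ (m - ν - d * (j : ℝ)))

open Asymptotics

section dLine

variable {E F G : Type*} [NormedAddCommGroup E] [NormedSpace ℝ E]
  [NormedAddCommGroup F] [NormedSpace ℝ F] [NormedAddCommGroup G] [NormedSpace ℝ G]

theorem dLine_append (L L' : List E) (f : E → F) :
    dLine (L ++ L') f = dLine L (dLine L' f) := by
  induction L with
  | nil => rfl
  | cons v L ih => simp only [List.cons_append, dLine, ih]

theorem dLine_append_singleton (L : List E) (v : E) (f : E → F) :
    dLine (L ++ [v]) f = dLine L (fun x => fderiv ℝ f x v) :=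
  dLine_append L [v] f

theorem contDiff_dLine {f : E → F} (hf : ContDiff ℝ (⊤ : ℕ∞) f) (L : List E) :
    ContDiff ℝ (⊤ : ℕ∞) (dLine L f) := by
  induction L with
  | nil => exact hf
  | cons v L ih =>
    exact (ContinuousLinearMap.apply ℝ F v).contDiff.comp (ih.fderiv_right (by norm_cast))

theorem differentiable_dLine {f : E → F} (hf : ContDiff ℝ (⊤ : ℕ∞) f) (L : List E) :
    Differentiable ℝ (dLine L f) :=
  (contDiff_dLine hf L).differentiable (by simp)

theorem dLine_zero (L : List E) : dLine L (fun _ => (0 : F)) = fun _ => 0 := by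
  induction L with
  | nil => rfl
  | cons v L ih => ext x; simp [dLine, ih]

theorem dLine_const {L : List E} (hL : L ≠ []) (a : F) : dLine L (fun _ => a) = fun _ => 0 := by
  obtain ⟨L, v, rfl⟩ := (List.eq_nil_or_concat' L).resolve_left hL
  simpa [dLine_append_singleton] using dLine_zero L

theorem dLine_comp_clm {g : G → F} (hg : ContDiff ℝ (⊤ : ℕ∞) g) (π : E →L[ℝ] G) (L : List E) :
    dLine L (g ∘ π) = dLine (L.map π) g ∘ π := by
  induction L with
  | nil => rfl
  | cons v L ih =>
    ext x
    show fderiv ℝ (dLine L (g ∘ π)) x v = fderiv ℝ (dLine (L.map π) g) (π x) (π v)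
    rw [ih, fderiv_comp x ((differentiable_dLine hg _) (π x)) π.differentiableAt, π.fderiv]
    rfl

theorem fderiv_fderiv_apply_comm {f : E → F} (hf : ContDiff ℝ (⊤ : ℕ∞) f) (x v w : E) :
    fderiv ℝ (fun y => fderiv ℝ f y v) x w = fderiv ℝ (fun y => fderiv ℝ f y w) x v := by
  have hdf : Differentiable ℝ (fderiv ℝ f) :=
    (hf.fderiv_right (m := 1) (by norm_cast)).differentiable one_ne_zero
  have hsymm := hf.contDiffAt.isSymmSndFDerivAt (x := x)
    (by simp only [minSmoothness_of_isRCLikeNormedField]; norm_cast)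
  rw [fderiv_clm_apply (hdf x) (differentiableAt_const _),
    fderiv_clm_apply (hdf x) (differentiableAt_const _)]
  simpa using hsymm w v

theorem dLine_perm {f : E → F} (hf : ContDiff ℝ (⊤ : ℕ∞) f) {L L' : List E} (h : L.Perm L') :
    dLine L f = dLine L' f := by
  induction h with
  | nil => rfl
  | cons v _ ih => rw [dLine, dLine, ih]
  | swap v w L => ext x; exact fderiv_fderiv_apply_comm (contDiff_dLine hf L) x v w
  | trans _ _ ih₁ ih₂ => rw [ih₁, ih₂]

end dLine

namespace List

variable {α : Type*}

def bipartitions : List α → List (List α × List α)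
  | [] => [([], [])]
  | v :: L => L.bipartitions.flatMap fun st => [(v :: st.1, st.2), (st.1, v :: st.2)]

theorem perm_of_mem_bipartitions {L : List α} {st : List α × List α}
    (h : st ∈ L.bipartitions) : (st.1 ++ st.2).Perm L := by
  induction L generalizing st with
  | nil => simp_all [bipartitions]
  | cons v L ih =>
    simp only [bipartitions, mem_flatMap, mem_cons, not_mem_nil, or_false] at h
    obtain ⟨st', hst', rfl | rfl⟩ := h
    · exact (ih hst').cons v
    · exact perm_middle.trans ((ih hst').cons v)

theorem filter_bipartitions_fst_eq_nil (L : List α) :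
    L.bipartitions.filter (fun st => st.1 = []) = [([], L)] := by
  induction L with
  | nil => rfl
  | cons v L ih =>
    have h : ∀ st : List α × List α,
        [(v :: st.1, st.2), (st.1, v :: st.2)].filter (fun st => st.1 = [])
          = ([st].filter (fun st => st.1 = [])).map fun st => (st.1, v :: st.2) := by
      rintro ⟨_ | _, _⟩ <;> rfl
    rw [bipartitions, filter_flatMap]
    simp only [h, ← map_flatMap, ← filter_flatMap, flatMap_singleton', ih]
    rfl

end List

theorem HasFDerivAt.list_sum {ι E F : Type*} [NormedAddCommGroup E] [NormedSpace ℝ E]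
    [NormedAddCommGroup F] [NormedSpace ℝ F] {l : List ι} {A : ι → E → F} {A' : ι → E →L[ℝ] F}
    {x : E} (h : ∀ i ∈ l, HasFDerivAt (A i) (A' i) x) :
    HasFDerivAt (fun y => (l.map (A · y)).sum) (l.map A').sum x := by
  induction l with
  | nil => simpa using hasFDerivAt_const (0 : F) x
  | cons a l ih =>
    simp only [List.map_cons, List.sum_cons]
    exact (h a (by simp)).add (ih fun i hi => h i (by simp [hi]))

theorem Asymptotics.IsBigO.list_sum {ι α E F : Type*} [Norm F] [SeminormedAddCommGroup E]
    {l : Filter α} {g : α → F} {L : List ι} {A : ι → α → E} (h : ∀ i ∈ L, A i =O[l] g) :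
    (fun x => (L.map (A · x)).sum) =O[l] g := by
  induction L with
  | nil => simpa using isBigO_zero g l
  | cons i L ih => simpa using (h i (by simp)).add (ih fun j hj => h j (by simp [hj]))

section Leibniz

variable {ι E 𝔸 : Type*} [NormedAddCommGroup E] [NormedSpace ℝ E]
  [NormedCommRing 𝔸] [NormedAlgebra ℝ 𝔸]

theorem dLine_mul {f g : E → 𝔸} (hf : ContDiff ℝ (⊤ : ℕ∞) f) (hg : ContDiff ℝ (⊤ : ℕ∞) g)
    (v : ι → E) (L : List ι) :
    dLine (L.map v) (fun x => f x * g x) = fun x =>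
      (L.bipartitions.map fun st => dLine (st.1.map v) f x * dLine (st.2.map v) g x).sum := by
  induction L with
  | nil => ext x; simp [List.bipartitions, dLine]
  | cons w L ih =>
    ext x
    have hderiv := HasFDerivAt.list_sum (l := L.bipartitions) (x := x)
      (A := fun st y => dLine (st.1.map v) f y * dLine (st.2.map v) g y) fun st _ =>
        ((differentiable_dLine hf (st.1.map v) x).hasFDerivAt).mul
          (differentiable_dLine hg (st.2.map v) x).hasFDerivAt
    show fderiv ℝ (dLine (L.map v) _) x (v w) = _
    rw [ih, hderiv.fderiv, ← ContinuousLinearMap.apply_apply (v w), map_list_sum,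
      List.bipartitions, List.map_flatMap]
    simp only [List.flatMap, List.sum_flatten, List.map_map]
    congr 1
    refine List.map_congr_left fun st _ => ?_
    simp only [Function.comp_apply, ContinuousLinearMap.apply_apply, List.map_cons, List.map_nil,
      add_apply, smul_apply, smul_eq_mul, List.sum_cons, List.sum_nil, dLine]
    ring

theorem mul_dLine_eq_neg_sum {f g : E → 𝔸} (hf : ContDiff ℝ (⊤ : ℕ∞) f)
    (hg : ContDiff ℝ (⊤ : ℕ∞) g) (hfg : ∀ x, f x * g x = 1) (v : ι → E) {L : List ι}
    (hL : L ≠ []) (x : E) :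
    f x * dLine (L.map v) g x = -((L.bipartitions.filter (fun st => ¬st.1 = [])).map
      fun st => dLine (st.1.map v) f x * dLine (st.2.map v) g x).sum := by
  have hsum := List.sum_map_filter_add_sum_map_filter_not (fun st => st.1 = [])
    (fun st => dLine (st.1.map v) f x * dLine (st.2.map v) g x) L.bipartitions
  rw [List.filter_bipartitions_fst_eq_nil, ← congrFun (dLine_mul hf hg v L) x] at hsum
  simp only [hfg, dLine_const (L := L.map v) (by simpa using hL), List.map_cons, List.map_nil,
    List.sum_cons, List.sum_nil, add_zero] at hsum
  exact eq_neg_of_add_eq_zero_left hsum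

end Leibniz

section JapKap

variable {n : ℕ} {d : ℝ}

theorem one_le_jap (ξ : EuclideanSpace ℝ (Fin n)) : 1 ≤ jap ξ :=
  Real.one_le_rpow (le_add_of_nonneg_right (sq_nonneg _)) (by norm_num)

theorem jap_pos (ξ : EuclideanSpace ℝ (Fin n)) : 0 < jap ξ :=
  one_pos.trans_le (one_le_jap ξ)

theorem jap_le_kap (hd : 0 < d) (ξ : EuclideanSpace ℝ (Fin n)) (τ : ℝ) : jap ξ ≤ kap d ξ τ := by
  have hJ := jap_pos ξ
  calc jap ξ = (jap ξ ^ (2 * d)) ^ (1 / (2 * d)) := by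
        rw [← Real.rpow_mul hJ.le, mul_one_div_cancel (by positivity), Real.rpow_one]
    _ ≤ kap d ξ τ :=
        Real.rpow_le_rpow (by positivity) (le_add_of_nonneg_right (sq_nonneg τ)) (by positivity)

theorem kap_pos (hd : 0 < d) (ξ : EuclideanSpace ℝ (Fin n)) (τ : ℝ) : 0 < kap d ξ τ :=
  (jap_pos ξ).trans_le (jap_le_kap hd ξ τ)

theorem kap_rpow_le (hd : 0 < d) (ξ : EuclideanSpace ℝ (Fin n)) (τ : ℝ) :
    kap d ξ τ ^ d ≤ jap ξ ^ d + |τ| := by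
  have hJ := jap_pos ξ
  have hJ2 : jap ξ ^ (2 * d) = (jap ξ ^ d) ^ 2 := by
    rw [← Real.rpow_natCast, ← Real.rpow_mul hJ.le]
    ring_nf
  rw [kap, ← Real.rpow_mul (by positivity), one_div_mul_eq_div, div_mul_cancel_right₀ hd.ne',
    ← one_div, ← Real.sqrt_eq_rpow, hJ2, ← sq_abs τ]
  exact Real.sqrt_le_iff.2 ⟨by positivity, by nlinarith [abs_nonneg τ, Real.rpow_nonneg hJ.le d]⟩

end JapKap

inductive Dir (n : ℕ)
  | dx : Fin n → Dir n
  | dξ : Fin n → Dir n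
  | dτ : Dir n

section Symbol

variable {n : ℕ}

local notation "ℝ^" n:max => EuclideanSpace ℝ (Fin n)

namespace Dir

noncomputable def toVec : Dir n → ℝ^n × ℝ^n × ℝ
  | dx i => (EuclideanSpace.single i 1, 0, 0)
  | dξ i => (0, EuclideanSpace.single i 1, 0)
  | dτ => (0, 0, 1)

def isξ : Dir n → Bool
  | dξ _ => true
  | _ => false

def isτ : Dir n → Bool
  | dτ => true
  | _ => false

theorem isτ_eq_false_of_mem {S : List (Dir n)} (hτ : dτ ∉ S) {w : Dir n} (hw : w ∈ S) :
    w.isτ = false := by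
  cases w
  · rfl
  · rfl
  · exact absurd hw hτ

def ofIndices (B A : List (Fin n)) (j : ℕ) : List (Dir n) :=
  B.map dx ++ A.map dξ ++ List.replicate j dτ

theorem map_toVec_ofIndices (B A : List (Fin n)) (j : ℕ) :
    (ofIndices B A j).map toVec
      = B.map (fun i => ((EuclideanSpace.single i 1 : ℝ^n), (0 : ℝ^n), (0 : ℝ)))
        ++ A.map (fun i => ((0 : ℝ^n), (EuclideanSpace.single i 1 : ℝ^n), (0 : ℝ)))
        ++ List.replicate j ((0 : ℝ^n), (0 : ℝ^n), (1 : ℝ)) := by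
  simp [ofIndices, Function.comp_def, toVec]

end Dir

def HasSymbolEstimates (d : ℝ) (p : ℝ^n × ℝ^n → ℂ) : Prop :=
  ∀ B A : List (Fin n), ∃ C : ℝ, ∀ (x ξ : ℝ^n),
    ‖dLine (B.map (fun i => ((EuclideanSpace.single i 1 : ℝ^n), (0 : ℝ^n)))
        ++ A.map (fun i => ((0 : ℝ^n), (EuclideanSpace.single i 1 : ℝ^n)))) p (x, ξ)‖
      ≤ C * jap ξ ^ (d - (A.length : ℝ))

noncomputable def addITau (p : ℝ^n × ℝ^n → ℂ) (z : ℝ^n × ℝ^n × ℝ) : ℂ :=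
  p (z.1, z.2.1) + Complex.I * (z.2.2 : ℂ)

noncomputable def projXξ (n : ℕ) : ℝ^n × ℝ^n × ℝ →L[ℝ] ℝ^n × ℝ^n :=
  (ContinuousLinearMap.fst ℝ _ _).prod
    ((ContinuousLinearMap.fst ℝ _ _).comp (ContinuousLinearMap.snd ℝ _ _))

noncomputable def iTauCLM (n : ℕ) : ℝ^n × ℝ^n × ℝ →L[ℝ] ℂ :=
  Complex.I • Complex.ofRealCLM.comp
    ((ContinuousLinearMap.snd ℝ _ _).comp (ContinuousLinearMap.snd ℝ _ _))

noncomputable def invWeight (d : ℝ) (L : List (Dir n)) (z : ℝ^n × ℝ^n × ℝ) : ℝ :=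
  jap z.2.1 ^ (-(L.countP Dir.isξ : ℝ)) * kap d z.2.1 z.2.2 ^ (-(d * (L.countP Dir.isτ + 1)))
    * if L.all Dir.isτ then 1 else (jap z.2.1 / kap d z.2.1 z.2.2) ^ d

variable {p : ℝ^n × ℝ^n → ℂ} {d : ℝ}

theorem addITau_eq (p : ℝ^n × ℝ^n → ℂ) : addITau p = p ∘ projXξ n + iTauCLM n := by
  ext z
  simp [addITau, projXξ, iTauCLM]

theorem contDiff_addITau (hp : ContDiff ℝ (⊤ : ℕ∞) p) : ContDiff ℝ (⊤ : ℕ∞) (addITau p) := by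
  rw [addITau_eq]
  exact (hp.comp (projXξ _).contDiff).add (iTauCLM _).contDiff

theorem fderiv_addITau_apply (hp : Differentiable ℝ p) (z w : ℝ^n × ℝ^n × ℝ) :
    fderiv ℝ (addITau p) z w = fderiv ℝ p (z.1, z.2.1) (w.1, w.2.1) + Complex.I * (w.2.2 : ℂ) := by
  rw [addITau_eq]
  have h := ((hp _).hasFDerivAt.comp z (projXξ _).hasFDerivAt).add (iTauCLM _).hasFDerivAt
  rw [h.fderiv]
  simp [projXξ, iTauCLM]

theorem dLine_addITau_of_dτ_mem (hp : ContDiff ℝ (⊤ : ℕ∞) p) (s t : List (Dir n)) :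
    dLine ((s ++ .dτ :: t).map Dir.toVec) (addITau p)
      = dLine ((s ++ t).map Dir.toVec) (fun _ => Complex.I) := by
  have hperm : ((s ++ .dτ :: t).map Dir.toVec).Perm
      ((s ++ t).map Dir.toVec ++ [Dir.toVec .dτ]) :=
    (List.perm_middle.map _).trans (List.perm_append_singleton _ _).symm
  rw [dLine_perm (contDiff_addITau hp) hperm, dLine_append_singleton]
  congr 1
  ext z
  rw [fderiv_addITau_apply (hp.differentiable (by simp))]
  simp [Dir.toVec, Prod.mk_zero_zero]

theorem dLine_addITau_of_dτ_not_mem (hp : ContDiff ℝ (⊤ : ℕ∞) p) {S : List (Dir n)}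
    (hS : S ≠ []) (hτ : .dτ ∉ S) :
    dLine (S.map Dir.toVec) (addITau p) = dLine (S.map (projXξ n ∘ Dir.toVec)) p ∘ projXξ n := by
  obtain ⟨S, w, rfl⟩ := (List.eq_nil_or_concat' S).resolve_left hS
  have hw : (w.toVec).2.2 = 0 := by
    cases w <;> simp_all [Dir.toVec]
  rw [← List.map_map, ← dLine_comp_clm hp]
  simp only [List.map_append, List.map_cons, List.map_nil, dLine_append_singleton]
  congr 1
  ext z
  rw [fderiv_addITau_apply (hp.differentiable (by simp)),
    fderiv_comp z ((hp.differentiable (by simp)) _) (projXξ n).differentiableAt, (projXξ n).fderiv]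
  simp [hw, projXξ]

theorem exists_perm_of_dτ_not_mem {S : List (Dir n)} (hτ : .dτ ∉ S) :
    ∃ B A : List (Fin n), (S.map (projXξ n ∘ Dir.toVec)).Perm
      (B.map (fun i => ((EuclideanSpace.single i 1 : ℝ^n), (0 : ℝ^n)))
        ++ A.map (fun i => ((0 : ℝ^n), (EuclideanSpace.single i 1 : ℝ^n))))
      ∧ A.length = S.countP Dir.isξ := by
  induction S with
  | nil => exact ⟨[], [], by simp⟩
  | cons w S ih =>
    obtain ⟨B, A, hperm, hA⟩ := ih (List.not_mem_of_not_mem_cons hτ)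
    cases w with
    | dx i => exact ⟨i :: B, A, hperm.cons _, by simp [Dir.isξ, hA]⟩
    | dξ i =>
      exact ⟨B, i :: A, (hperm.cons _).trans List.perm_middle.symm,
        by simp [Dir.isξ, List.countP_cons, hA]⟩
    | dτ => simp at hτ

theorem isBigO_dLine_addITau (hp : ContDiff ℝ (⊤ : ℕ∞) p) (hest : HasSymbolEstimates d p)
    {S : List (Dir n)} (hS : S ≠ []) (hτ : .dτ ∉ S) :
    dLine (S.map Dir.toVec) (addITau p) =O[⊤] fun z => jap z.2.1 ^ (d - S.countP Dir.isξ) := by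
  obtain ⟨B, A, hperm, hA⟩ := exists_perm_of_dτ_not_mem hτ
  obtain ⟨C, hC⟩ := hest B A
  refine isBigO_top.2 ⟨C, fun z => ?_⟩
  rw [dLine_addITau_of_dτ_not_mem hp hS hτ, Function.comp_apply, dLine_perm hp hperm, ← hA,
    Real.norm_of_nonneg (Real.rpow_nonneg (jap_pos _).le _)]
  exact hC z.1 z.2.1

theorem invWeight_pos (hd : 0 < d) (L : List (Dir n)) (z : ℝ^n × ℝ^n × ℝ) :
    0 < invWeight d L z := by
  have hJ := jap_pos z.2.1
  have hK := kap_pos hd z.2.1 z.2.2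
  unfold invWeight
  split_ifs <;> positivity

theorem invWeight_perm {L L' : List (Dir n)} (h : L.Perm L') : invWeight d L = invWeight d L' := by
  ext z
  simp only [invWeight, h.countP_eq, h.all_eq]

theorem invWeight_nil (z : ℝ^n × ℝ^n × ℝ) : invWeight d [] z = kap d z.2.1 z.2.2 ^ (-d) := by
  simp [invWeight]

theorem invWeight_eq_mul_invWeight_cons_dτ (hd : 0 < d) (L : List (Dir n))
    (z : ℝ^n × ℝ^n × ℝ) : invWeight d L z = kap d z.2.1 z.2.2 ^ d * invWeight d (.dτ :: L) z := by
  have hξ : (Dir.dτ :: L).countP Dir.isξ = L.countP Dir.isξ :=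
    List.countP_cons_of_neg Bool.false_ne_true
  have hτ : (Dir.dτ :: L).countP Dir.isτ = L.countP Dir.isτ + 1 := List.countP_cons_of_pos rfl
  have hall : (Dir.dτ :: L).all Dir.isτ = L.all Dir.isτ := rfl
  have hK : kap d z.2.1 z.2.2 ^ (-(d * (L.countP Dir.isτ + 1)))
      = kap d z.2.1 z.2.2 ^ d * kap d z.2.1 z.2.2 ^ (-(d * ((L.countP Dir.isτ + 1 : ℕ) + 1))) := by
    rw [← Real.rpow_add (kap_pos hd z.2.1 z.2.2)]
    push_cast
    ring_nf
  rw [invWeight, invWeight, hξ, hτ, hall, hK]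
  ring

theorem jap_rpow_mul_invWeight_le (hd : 0 < d) {S : List (Dir n)} (hS : S ≠ []) (hτ : .dτ ∉ S)
    (T : List (Dir n)) (z : ℝ^n × ℝ^n × ℝ) :
    jap z.2.1 ^ (d - S.countP Dir.isξ) * invWeight d T z
      ≤ kap d z.2.1 z.2.2 ^ d * invWeight d (S ++ T) z := by
  have hcountτ : S.countP Dir.isτ = 0 :=
    List.countP_eq_zero.2 fun w hw => by simp [Dir.isτ_eq_false_of_mem hτ hw]
  have hall : (S ++ T).all Dir.isτ = false := by
    obtain ⟨w, hw⟩ := List.exists_mem_of_ne_nil S hS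
    exact List.all_eq_false.2
      ⟨w, List.mem_append_left T hw, by simp [Dir.isτ_eq_false_of_mem hτ hw]⟩
  simp only [invWeight, List.countP_append, hcountτ, hall, zero_add]
  push_cast
  set J := jap z.2.1
  set K := kap d z.2.1 z.2.2
  set a := (S.countP Dir.isξ : ℝ)
  set b := (T.countP Dir.isξ : ℝ)
  set e := -(d * (T.countP Dir.isτ + 1))
  set t := if T.all Dir.isτ then 1 else (J / K) ^ d
  have hJ : 0 < J := jap_pos _
  have hK : 0 < K := kap_pos hd _ _
  have ht : t ≤ 1 := by
    unfold t
    split_ifs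
    · exact le_rfl
    · exact Real.rpow_le_one (by positivity) ((div_le_one hK).2 (jap_le_kap hd _ _)) hd.le
  have hK_mul : (J / K) ^ d * K ^ d = J ^ d := by
    rw [Real.div_rpow hJ.le hK.le, div_mul_cancel₀ _ (Real.rpow_pos_of_pos hK d).ne']
  have hJ_mul : J ^ (d - a) * J ^ (-b) = J ^ (-(a + b)) * J ^ d := by
    rw [← Real.rpow_add hJ, ← Real.rpow_add hJ]
    ring_nf
  calc J ^ (d - a) * (J ^ (-b) * K ^ e * t) ≤ J ^ (d - a) * (J ^ (-b) * K ^ e) :=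
        mul_le_mul_of_nonneg_left (mul_le_of_le_one_right (by positivity) ht) (by positivity)
    _ = K ^ d * (J ^ (-(a + b)) * K ^ e * (J / K) ^ d) := by
        rw [← mul_assoc, hJ_mul, ← hK_mul]
        ring

theorem invWeight_ofIndices_le (hd : 0 < d) (B A : List (Fin n)) (j : ℕ) (x ξ : ℝ^n) (τ : ℝ) :
    invWeight d (Dir.ofIndices B A j) (x, ξ, τ)
      ≤ (jap ξ ^ (d - (A.length : ℝ)) + kap d ξ τ ^ (d - (A.length : ℝ)))
          * kap d ξ τ ^ (-d - d - d * (j : ℝ)) := by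
  have hJ := jap_pos ξ
  have hK := kap_pos hd ξ τ
  have hξ : (Dir.ofIndices B A j).countP Dir.isξ = A.length := by
    simp [Dir.ofIndices, List.countP_replicate, Function.comp_def, Dir.isξ]
  have hτ : (Dir.ofIndices B A j).countP Dir.isτ = j := by
    simp [Dir.ofIndices, List.countP_replicate, Function.comp_def, Dir.isτ]
  rw [invWeight, hξ, hτ]
  split_ifs with hall
  · obtain rfl : A = [] := by
      cases A with
      | nil => rfl
      | cons a A => simp [Dir.ofIndices, Dir.isτ] at hall
    have hsplit : kap d ξ τ ^ (-(d * (j + 1))) = kap d ξ τ ^ d * kap d ξ τ ^ (-d - d - d * j) := by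
      rw [← Real.rpow_add hK]
      ring_nf
    simp only [List.length_nil, CharP.cast_eq_zero, neg_zero, Real.rpow_zero, one_mul, mul_one,
      sub_zero, hsplit]
    exact mul_le_mul_of_nonneg_right (le_add_of_nonneg_left (by positivity)) (by positivity)
  · have hsplit : jap ξ ^ (-(A.length : ℝ)) * kap d ξ τ ^ (-(d * (j + 1)))
          * (jap ξ / kap d ξ τ) ^ d = jap ξ ^ (d - A.length) * kap d ξ τ ^ (-d - d - d * j) := by
      rw [Real.div_rpow hJ.le hK.le, sub_eq_neg_add, Real.rpow_add hJ,
        show -d - d - d * j = -(d * (j + 1)) + -d by ring, Real.rpow_add hK, Real.rpow_neg hK.le d]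
      ring
    rw [hsplit]
    exact mul_le_mul_of_nonneg_right (le_add_of_nonneg_right (by positivity)) (by positivity)

theorem isBigO_dLine_addITau_mul (hd : 0 < d) (hp : ContDiff ℝ (⊤ : ℕ∞) p)
    (hest : HasSymbolEstimates d p) {g : ℝ^n × ℝ^n × ℝ → ℂ} {S T : List (Dir n)} (hS : S ≠ [])
    (hT : dLine (T.map Dir.toVec) g =O[⊤] invWeight d T) :
    (fun z => dLine (S.map Dir.toVec) (addITau p) z * dLine (T.map Dir.toVec) g z)
      =O[⊤] fun z => kap d z.2.1 z.2.2 ^ d * invWeight d (S ++ T) z := by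
  by_cases hτ : Dir.dτ ∈ S
  · obtain ⟨s, t, rfl⟩ := List.append_of_mem hτ
    rw [dLine_addITau_of_dτ_mem hp]
    rcases eq_or_ne (s ++ t) [] with hst | hst
    · obtain ⟨rfl, rfl⟩ := List.append_eq_nil_iff.1 hst
      exact (hT.const_mul_left Complex.I).congr_right (invWeight_eq_mul_invWeight_cons_dτ hd T)
    · simp only [dLine_const (List.map_eq_nil_iff.not.2 hst), zero_mul]
      exact isBigO_zero _ _
  · refine ((isBigO_dLine_addITau hp hest hS hτ).mul hT).trans_le fun z => ?_
    have hJ := jap_pos z.2.1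
    have hK := kap_pos hd z.2.1 z.2.2
    have hW := invWeight_pos hd T z
    have hW' := invWeight_pos hd (S ++ T) z
    rw [Real.norm_of_nonneg (by positivity), Real.norm_of_nonneg (by positivity)]
    exact jap_rpow_mul_invWeight_le hd hS hτ T z

theorem addITau_ne_zero (hd : 0 < d) {c : ℝ} (hc : 0 < c)
    (hq : ∀ z, c * kap d z.2.1 z.2.2 ^ d ≤ ‖addITau p z‖) (z : ℝ^n × ℝ^n × ℝ) :
    addITau p z ≠ 0 :=
  norm_pos_iff.1 ((mul_pos hc (Real.rpow_pos_of_pos (kap_pos hd _ _) d)).trans_le (hq z))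

theorem isBigO_inv_addITau (hd : 0 < d) {c : ℝ} (hc : 0 < c)
    (hq : ∀ z, c * kap d z.2.1 z.2.2 ^ d ≤ ‖addITau p z‖) :
    (fun z => (addITau p z)⁻¹) =O[⊤] fun z => kap d z.2.1 z.2.2 ^ (-d) := by
  refine isBigO_top.2 ⟨c⁻¹, fun z => ?_⟩
  have hK := kap_pos hd z.2.1 z.2.2
  rw [norm_inv, Real.norm_of_nonneg (Real.rpow_nonneg hK.le _), Real.rpow_neg hK.le, ← mul_inv]
  exact inv_anti₀ (mul_pos hc (Real.rpow_pos_of_pos hK d)) (hq z)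

theorem isBigO_dLine_inv_addITau (hd : 0 < d) (hp : ContDiff ℝ (⊤ : ℕ∞) p)
    (hest : HasSymbolEstimates d p) {c : ℝ} (hc : 0 < c)
    (hq : ∀ z, c * kap d z.2.1 z.2.2 ^ d ≤ ‖addITau p z‖) (L : List (Dir n)) :
    dLine (L.map Dir.toVec) (fun z => (addITau p z)⁻¹) =O[⊤] invWeight d L := by
  have hq0 := addITau_ne_zero hd hc hq
  have hr := isBigO_inv_addITau hd hc hq
  have hqr : ContDiff ℝ (⊤ : ℕ∞) fun z => (addITau p z)⁻¹ := (contDiff_addITau hp).inv hq0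
  induction L using (measure List.length).wf.induction with
  | _ L ih =>
  rcases eq_or_ne L [] with rfl | hL
  · exact hr.congr_right fun z => (invWeight_nil z).symm
  have hsum := IsBigO.list_sum (l := ⊤) (L := L.bipartitions.filter fun st => ¬st.1 = [])
    (A := fun st z => dLine (st.1.map Dir.toVec) (addITau p) z
      * dLine (st.2.map Dir.toVec) (fun z => (addITau p z)⁻¹) z)
    (g := fun z : ℝ^n × ℝ^n × ℝ => kap d z.2.1 z.2.2 ^ d * invWeight d L z) fun st hst => by
      obtain ⟨hmem, hne⟩ := List.mem_filter.1 hst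
      have hperm := List.perm_of_mem_bipartitions hmem
      have hlen := hperm.length_eq
      rw [List.length_append] at hlen
      have hpos := List.length_pos_of_ne_nil (of_decide_eq_true hne)
      rw [← invWeight_perm hperm]
      exact isBigO_dLine_addITau_mul hd hp hest (of_decide_eq_true hne)
        (ih st.2 (show st.2.length < L.length by omega))
  have hexpand : dLine (L.map Dir.toVec) (fun z => (addITau p z)⁻¹) = fun z => (addITau p z)⁻¹
      * -((L.bipartitions.filter fun st => ¬st.1 = []).map fun st =>
        dLine (st.1.map Dir.toVec) (addITau p) z
          * dLine (st.2.map Dir.toVec) (fun z => (addITau p z)⁻¹) z).sum := by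
    ext z
    rw [← mul_dLine_eq_neg_sum (contDiff_addITau hp) hqr (fun z => mul_inv_cancel₀ (hq0 z)) _ hL,
      inv_mul_cancel_left₀ (hq0 z)]
  rw [hexpand]
  refine (hr.mul hsum.neg_left).congr_right fun z => ?_
  rw [← mul_assoc, ← Real.rpow_add (kap_pos hd _ _), neg_add_cancel, Real.rpow_zero, one_mul]

end Symbol

/-- If `p(x,ξ)` is a smooth symbol of order `d` on `ℝⁿ×ℝⁿ`
(`|∂_x^β ∂_ξ^α p| ≤ C_{α,β} ⟨ξ⟩^{d-|α|}`) and moreover `|p(x,ξ)+iτ| ≥ c(⟨ξ⟩^d + |τ|)`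
for some `c > 0`, then `(p(x,ξ)+iτ)⁻¹` belongs to the anisotropic symbol class
`S^{-d,d}_{1,0}` (so its estimates carry the factor `{ξ,τ}^{-2d-dj}`). -/
theorem stmt_3 {n : ℕ} (d : ℝ) (hd : 0 < d)
    (p : EuclideanSpace ℝ (Fin n) × EuclideanSpace ℝ (Fin n) → ℂ)
    (hp : ContDiff ℝ (⊤ : ℕ∞) p)
    (hest : ∀ B A : List (Fin n), ∃ C : ℝ, ∀ (x ξ : EuclideanSpace ℝ (Fin n)),
      ‖dLine
          (B.map (fun i => ((EuclideanSpace.single i 1 : EuclideanSpace ℝ (Fin n)),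
              (0 : EuclideanSpace ℝ (Fin n))))
            ++ A.map (fun i => ((0 : EuclideanSpace ℝ (Fin n)),
              (EuclideanSpace.single i 1 : EuclideanSpace ℝ (Fin n)))))
          p (x, ξ)‖
        ≤ C * jap ξ ^ (d - (A.length : ℝ)))
    (c : ℝ) (hc : 0 < c)
    (hlow : ∀ (x ξ : EuclideanSpace ℝ (Fin n)) (τ : ℝ),
      c * (jap ξ ^ d + |τ|) ≤ ‖p (x, ξ) + Complex.I * (τ : ℂ)‖) :
    IsAnisoSymbol n d (-d) d (fun q => (p (q.1, q.2.1) + Complex.I * (q.2.2 : ℂ))⁻¹) := by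
  have hq : ∀ z, c * kap d z.2.1 z.2.2 ^ d ≤ ‖addITau p z‖ := fun z =>
    (mul_le_mul_of_nonneg_left (kap_rpow_le hd _ _) hc.le).trans (hlow _ _ _)
  refine ⟨(contDiff_addITau hp).inv (addITau_ne_zero hd hc hq), fun B A j => ?_⟩
  have hW : invWeight d (Dir.ofIndices B A j) =O[⊤]
      fun z : EuclideanSpace ℝ (Fin n) × EuclideanSpace ℝ (Fin n) × ℝ =>
        (jap z.2.1 ^ (d - (A.length : ℝ)) + kap d z.2.1 z.2.2 ^ (d - (A.length : ℝ)))
          * kap d z.2.1 z.2.2 ^ (-d - d - d * (j : ℝ)) := by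
    refine isBigO_of_le _ fun ⟨x, ξ, τ⟩ => ?_
    have hJ := jap_pos ξ
    have hK := kap_pos hd ξ τ
    rw [Real.norm_of_nonneg (invWeight_pos hd _ _).le, Real.norm_of_nonneg (by positivity)]
    exact invWeight_ofIndices_le hd B A j x ξ τ
  obtain ⟨C, hC⟩ := isBigO_top.1 ((isBigO_dLine_inv_addITau hd hp hest hc hq _).trans hW)
  refine ⟨C, fun x ξ τ => ?_⟩
  have hJ := jap_pos ξ
  have hK := kap_pos hd ξ τ
  have h := hC (x, ξ, τ)
  rwa [Dir.map_toVec_ofIndices, Real.norm_of_nonneg (by positivity)] at h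
end

section
/- Let n ≥ 2 and t ∈ ℝ, and write ξ = (ξ', ξ_n) ∈ ℝ^{n-1}×ℝ. The function χ_+^t(ξ) = (⟨ξ'⟩ + iξ_n)^t (principal power) satisfies the following anisotropic estimates with d = 1, order m = t and regularity number ν = 1: for every multi-index α = (α', α_n) ∈ ℕ^{n-1}×ℕ there is a constant C_α such that |∂_{ξ'}^{α'} ∂_{ξ_n}^{α_n} χ_+^t(ξ)| ≤ C_α (⟨ξ'⟩^{1-|α'|} + ⟨ξ⟩^{1-|α'|}) ⟨ξ⟩^{t-1-α_n} for all ξ ∈ ℝⁿ. -/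
/-- `⟨ξ⟩ = (1 + |ξ'|² + ξ_n²)^{1/2}` for `ξ = (ξ', ξ_n) ∈ ℝ^{n-1} × ℝ`. -/
noncomputable def japF {m : ℕ} (ξ : EuclideanSpace ℝ (Fin m) × ℝ) : ℝ :=
  (1 + ‖ξ.1‖ ^ 2 + ξ.2 ^ 2) ^ ((1 : ℝ) / 2)

/-!
`∂_{ξ_n}^j χ_+^t = c χ_+^{t-j}`. A tangential derivative `∂_{ξ_i}` of a term
`ξ'^β ⟨ξ'⟩^s χ_+^{a-k}` is a combination of three terms of the same shape, in which
`|β| + s - k` has dropped by exactly one and `k` has not decreased. Hence after `n ≥ 1`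
tangential derivatives of `c χ_+^a` every term has `|β| + s = k - n` with `k ≥ 1`, and since
`|ξ'^β| ≤ ⟨ξ'⟩^{|β|}` and `|χ_+| = ⟨ξ⟩ ≥ ⟨ξ'⟩` it is bounded by
`⟨ξ'⟩^{k-n} ⟨ξ⟩^{a-k} ≤ ⟨ξ'⟩^{1-n} ⟨ξ⟩^{a-1}`. For `n = 0` simply
`|χ_+^a| = ⟨ξ⟩ ⟨ξ⟩^{a-1}`.
-/

lemma dLine_append_s19 {E G : Type*} [NormedAddCommGroup E] [NormedSpace ℝ E]
    [NormedAddCommGroup G] [NormedSpace ℝ G] (L₁ L₂ : List E) (f : E → G) :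
    dLine (L₁ ++ L₂) f = dLine L₁ (dLine L₂ f) := by
  induction L₁ with
  | nil => rfl
  | cons v L ih => simp only [List.cons_append, dLine, ih]

lemma rpow_add_mul_rpow_sub_le {x y : ℝ} (hx : 0 < x) (hxy : x ≤ y) {p : ℝ} (hp : 0 ≤ p)
    (q r : ℝ) : x ^ (q + p) * y ^ (r - p) ≤ x ^ q * y ^ r := by
  have hy := hx.trans_le hxy
  calc x ^ (q + p) * y ^ (r - p) = x ^ q * x ^ p * y ^ (r - p) := by rw [Real.rpow_add hx]
    _ ≤ x ^ q * y ^ p * y ^ (r - p) := by gcongr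
    _ = x ^ q * y ^ r := by rw [mul_assoc, ← Real.rpow_add hy, add_sub_cancel]

lemma Finset.sum_update_add_self {ι M : Type*} [Fintype ι] [DecidableEq ι] [AddCommMonoid M]
    (f : ι → M) (i : ι) (v : M) : ∑ j, Function.update f i v j + f i = ∑ j, f j + v := by
  rw [Finset.sum_update_of_mem (Finset.mem_univ i),
    Finset.sum_eq_sum_sdiff_singleton_add (Finset.mem_univ i) f]
  abel

namespace OrderReducing

open Complex Asymptotics

variable {m : ℕ}

noncomputable def chiPlus (ξ : EuclideanSpace ℝ (Fin m) × ℝ) : ℂ :=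
  (jap ξ.1 : ℂ) + I * ξ.2

noncomputable def coordMonomial (β : Fin m → ℕ) (x : EuclideanSpace ℝ (Fin m)) : ℝ :=
  ∏ i, x i ^ β i

noncomputable def symbolTerm (β : Fin m → ℕ) (s b : ℝ)
    (ξ : EuclideanSpace ℝ (Fin m) × ℝ) : ℂ :=
  ((coordMonomial β ξ.1 * jap ξ.1 ^ s : ℝ) : ℂ) * chiPlus ξ ^ (b : ℂ)

lemma symbolTerm_zero_zero (b : ℝ) (ξ : EuclideanSpace ℝ (Fin m) × ℝ) :
    symbolTerm 0 0 b ξ = chiPlus ξ ^ (b : ℂ) := by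
  simp [symbolTerm, coordMonomial]

lemma jap_rpow (x : EuclideanSpace ℝ (Fin m)) (s : ℝ) :
    jap x ^ s = (1 + ‖x‖ ^ 2) ^ (s / 2) := by
  rw [jap, ← Real.rpow_mul (by positivity), one_div_mul_eq_div]

lemma jap_pos (x : EuclideanSpace ℝ (Fin m)) : 0 < jap x := by
  unfold jap; positivity

lemma jap_sq (x : EuclideanSpace ℝ (Fin m)) : jap x ^ 2 = 1 + ‖x‖ ^ 2 := by
  rw [← Real.rpow_two, jap_rpow, div_self two_ne_zero, Real.rpow_one]

lemma norm_le_jap (x : EuclideanSpace ℝ (Fin m)) : ‖x‖ ≤ jap x :=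
  abs_le_of_sq_le_sq' (by rw [jap_sq]; linarith) (jap_pos x).le |>.2

lemma japF_pos (ξ : EuclideanSpace ℝ (Fin m) × ℝ) : 0 < japF ξ := by
  unfold japF; positivity

lemma jap_le_japF (ξ : EuclideanSpace ℝ (Fin m) × ℝ) : jap ξ.1 ≤ japF ξ :=
  Real.rpow_le_rpow (by positivity) (by nlinarith [sq_nonneg ξ.2]) (by norm_num)

lemma norm_chiPlus (ξ : EuclideanSpace ℝ (Fin m) × ℝ) : ‖chiPlus ξ‖ = japF ξ := by
  rw [chiPlus, mul_comm, ← mk_eq_add_mul_I, norm_def, normSq_mk, japF, Real.sqrt_eq_rpow,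
    ← sq, ← sq, jap_sq]

lemma chiPlus_mem_slitPlane (ξ : EuclideanSpace ℝ (Fin m) × ℝ) : chiPlus ξ ∈ slitPlane :=
  Or.inl (by simpa [chiPlus] using jap_pos ξ.1)

lemma abs_coordMonomial_le (β : Fin m → ℕ) (x : EuclideanSpace ℝ (Fin m)) :
    |coordMonomial β x| ≤ jap x ^ (∑ i, β i) := by
  rw [coordMonomial, Finset.abs_prod, ← Finset.prod_pow_eq_pow_sum]
  gcongr with i
  rw [abs_pow]
  gcongr
  exact (PiLp.norm_apply_le x i).trans (norm_le_jap x)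

lemma norm_symbolTerm_le (β : Fin m → ℕ) (s b : ℝ) (ξ : EuclideanSpace ℝ (Fin m) × ℝ) :
    ‖symbolTerm β s b ξ‖ ≤ jap ξ.1 ^ ((∑ i, β i : ℕ) + s) * japF ξ ^ b := by
  have hJ := jap_pos ξ.1
  rw [symbolTerm, norm_mul, norm_real, Real.norm_eq_abs, abs_mul, norm_cpow_real, norm_chiPlus,
    abs_of_pos (Real.rpow_pos_of_pos hJ s), Real.rpow_add hJ, Real.rpow_natCast]
  exact mul_le_mul_of_nonneg_right (mul_le_mul_of_nonneg_right (abs_coordMonomial_le β ξ.1)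
    (Real.rpow_pos_of_pos hJ s).le) (Real.rpow_pos_of_pos (japF_pos ξ) b).le

noncomputable def anisoWeight (a : ℝ) (n : ℕ) (ξ : EuclideanSpace ℝ (Fin m) × ℝ) : ℝ :=
  (jap ξ.1 ^ (1 - (n : ℝ)) + japF ξ ^ (1 - (n : ℝ))) * japF ξ ^ (a - 1)

lemma anisoWeight_nonneg (a : ℝ) (n : ℕ) (ξ : EuclideanSpace ℝ (Fin m) × ℝ) :
    0 ≤ anisoWeight a n ξ := by
  have := jap_pos ξ.1
  have := japF_pos ξ
  unfold anisoWeight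
  positivity

lemma norm_chiPlus_cpow_le_anisoWeight (a : ℝ) (ξ : EuclideanSpace ℝ (Fin m) × ℝ) :
    ‖chiPlus ξ ^ (a : ℂ)‖ ≤ anisoWeight a 0 ξ := by
  have := jap_pos ξ.1
  rw [norm_cpow_real, norm_chiPlus, anisoWeight, Nat.cast_zero, sub_zero, Real.rpow_one,
    ← add_sub_cancel 1 a, Real.rpow_add (japF_pos ξ), Real.rpow_one, add_sub_cancel_left]
  exact mul_le_mul_of_nonneg_right (le_add_of_nonneg_left this.le)
    (Real.rpow_pos_of_pos (japF_pos ξ) _).le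

lemma norm_symbolTerm_le_anisoWeight {a s : ℝ} {n k : ℕ} {β : Fin m → ℕ} (hk : 1 ≤ k)
    (hβ : ((∑ i, β i : ℕ) : ℝ) + s = k - n) (ξ : EuclideanSpace ℝ (Fin m) × ℝ) :
    ‖symbolTerm β s (a - k) ξ‖ ≤ anisoWeight a n ξ := by
  have hk' : (1 : ℝ) ≤ k := by exact_mod_cast hk
  calc ‖symbolTerm β s (a - k) ξ‖
      ≤ jap ξ.1 ^ ((1 - n) + (k - 1 : ℝ)) * japF ξ ^ ((a - 1) - (k - 1 : ℝ)) := by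
        convert norm_symbolTerm_le β s (a - k) ξ using 3 <;> linarith
    _ ≤ jap ξ.1 ^ (1 - (n : ℝ)) * japF ξ ^ (a - 1) :=
        rpow_add_mul_rpow_sub_le (jap_pos _) (jap_le_japF ξ) (by linarith) _ _
    _ ≤ anisoWeight a n ξ := by
        have := japF_pos ξ
        unfold anisoWeight
        gcongr
        exact le_add_of_nonneg_right (by positivity)

@[fun_prop]
lemma differentiable_jap : Differentiable ℝ (jap (n := m)) := by
  unfold jap
  exact ((differentiable_const 1).add (differentiable_id.norm_sq ℝ)).rpow_const
    fun x => Or.inl (by simp only [Pi.add_apply, id]; positivity)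

@[fun_prop]
lemma differentiable_coordMonomial (β : Fin m → ℕ) :
    Differentiable ℝ (coordMonomial β) := by
  unfold coordMonomial
  fun_prop

lemma differentiable_chiPlus : Differentiable ℝ (chiPlus (m := m)) := by
  unfold chiPlus
  fun_prop

@[fun_prop]
lemma differentiable_chiPlus_cpow (b : ℂ) :
    Differentiable ℝ (fun ξ : EuclideanSpace ℝ (Fin m) × ℝ => chiPlus ξ ^ b) := fun ξ =>
  ((hasStrictDerivAt_cpow_const (chiPlus_mem_slitPlane ξ)).hasDerivAt.differentiableAt
    |>.restrictScalars ℝ).comp ξ (differentiable_chiPlus ξ)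

lemma differentiable_symbolTerm (β : Fin m → ℕ) (s b : ℝ) :
    Differentiable ℝ (symbolTerm β s b) := by
  unfold symbolTerm
  fun_prop (disch := exact fun _ => Or.inl (jap_pos _).ne')

lemma coordMonomial_eq_mul_prod_erase (β : Fin m → ℕ) (x : EuclideanSpace ℝ (Fin m))
    (i : Fin m) :
    coordMonomial β x = x i ^ β i * ∏ i' ∈ Finset.univ.erase i, x i' ^ β i' :=
  (Finset.mul_prod_erase _ _ (Finset.mem_univ i)).symm

lemma coordMonomial_update (β : Fin m → ℕ) (x : EuclideanSpace ℝ (Fin m)) (i : Fin m)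
    (k : ℕ) :
    coordMonomial (Function.update β i k) x
      = x i ^ k * ∏ i' ∈ Finset.univ.erase i, x i' ^ β i' := by
  rw [coordMonomial_eq_mul_prod_erase _ _ i, Function.update_self]
  congr 1
  exact Finset.prod_congr rfl fun i' hi' => by
    rw [Function.update_of_ne (Finset.ne_of_mem_erase hi')]

lemma coord_mul_coordMonomial (β : Fin m → ℕ) (x : EuclideanSpace ℝ (Fin m)) (i : Fin m) :
    x i * coordMonomial β x = coordMonomial (Function.update β i (β i + 1)) x := by
  rw [coordMonomial_update, coordMonomial_eq_mul_prod_erase _ _ i, pow_succ]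
  ring

lemma hasDerivAt_coordMonomial_add_smul_single (β : Fin m → ℕ) (x : EuclideanSpace ℝ (Fin m))
    (i : Fin m) :
    HasDerivAt (fun r : ℝ => coordMonomial β (x + r • EuclideanSpace.single i 1))
      (β i * coordMonomial (Function.update β i (β i - 1)) x) 0 := by
  have hline : ∀ r : ℝ, coordMonomial β (x + r • EuclideanSpace.single i 1)
      = (x i + r) ^ β i * ∏ i' ∈ Finset.univ.erase i, x i' ^ β i' := by
    intro r
    rw [coordMonomial_eq_mul_prod_erase _ _ i]
    congr 1
    · simp
    · exact Finset.prod_congr rfl fun i' hi' => by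
        simp [Finset.ne_of_mem_erase hi']
  simp_rw [hline, coordMonomial_update]
  simpa [mul_assoc] using (((hasDerivAt_id (0 : ℝ)).const_add (x i)).pow (β i)).mul_const
    (∏ i' ∈ Finset.univ.erase i, x i' ^ β i')

lemma hasDerivAt_jap_rpow_add_smul (x v : EuclideanSpace ℝ (Fin m)) (s : ℝ) :
    HasDerivAt (fun r : ℝ => jap (x + r • v) ^ s) (s * inner ℝ x v * jap x ^ (s - 2)) 0 := by
  simp_rw [jap_rpow]
  have h : HasDerivAt (fun r : ℝ => 1 + ‖x + r • v‖ ^ 2) (2 * inner ℝ x v) 0 := by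
    simpa using (((hasDerivAt_id (0 : ℝ)).smul_const v).const_add x).norm_sq.const_add 1
  convert h.rpow_const (p := s / 2) (Or.inl (by positivity)) using 1
  rw [zero_smul, add_zero, sub_div, div_self two_ne_zero]
  ring

/- `β i - 1` truncates at `β i = 0`, where its coefficient `β i` vanishes. -/
lemma hasLineDerivAt_symbolTerm_single (β : Fin m → ℕ) (s b : ℝ) (i : Fin m)
    (ξ : EuclideanSpace ℝ (Fin m) × ℝ) :
    HasLineDerivAt ℝ (symbolTerm β s b)
      (β i * symbolTerm (Function.update β i (β i - 1)) s b ξ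
        + s * symbolTerm (Function.update β i (β i + 1)) (s - 2) b ξ
        + b * symbolTerm (Function.update β i (β i + 1)) (s - 1) (b - 1) ξ)
      ξ (EuclideanSpace.single i 1, 0) := by
  obtain ⟨x, y⟩ := ξ
  have hJ := hasDerivAt_jap_rpow_add_smul x (EuclideanSpace.single i 1) s
  have hJ₁ := hasDerivAt_jap_rpow_add_smul x (EuclideanSpace.single i 1) 1
  simp only [EuclideanSpace.inner_single_right, Real.rpow_one, one_mul] at hJ hJ₁
  have hχ₁ : HasDerivAt (fun r : ℝ => chiPlus (x + r • EuclideanSpace.single i 1, y))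
      ((x i * jap x ^ ((1 : ℝ) - 2) : ℝ) : ℂ) 0 := by
    simpa [chiPlus] using hJ₁.ofReal_comp.add_const (I * y)
  have hχ := (hasStrictDerivAt_cpow_const (c := (b : ℂ))
    (by simpa using chiPlus_mem_slitPlane (x, y))).hasDerivAt.comp 0 hχ₁
  have := (((hasDerivAt_coordMonomial_add_smul_single β x i).mul hJ).ofReal_comp).mul hχ
  unfold HasLineDerivAt
  simp only [Prod.smul_mk, Prod.mk_add_mk, smul_zero, add_zero]
  refine this.congr_deriv ?_
  simp only [zero_smul, add_zero, Function.comp_apply, Pi.mul_apply, conj_trivial]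
  simp only [symbolTerm, ← coord_mul_coordMonomial]
  rw [show s - 1 = s + (1 - 2) by ring, Real.rpow_add (jap_pos x)]
  push_cast
  ring

lemma fderiv_const_mul_symbolTerm_single (c : ℂ) (β : Fin m → ℕ) (s b : ℝ) (i : Fin m)
    (ξ : EuclideanSpace ℝ (Fin m) × ℝ) :
    fderiv ℝ (fun ξ => c * symbolTerm β s b ξ) ξ (EuclideanSpace.single i 1, 0)
      = c * (β i * symbolTerm (Function.update β i (β i - 1)) s b ξ
        + s * symbolTerm (Function.update β i (β i + 1)) (s - 2) b ξ
        + b * symbolTerm (Function.update β i (β i + 1)) (s - 1) (b - 1) ξ) := by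
  rw [fderiv_const_mul (differentiable_symbolTerm _ _ _ ξ), smul_apply,
    smul_eq_mul, ((differentiable_symbolTerm _ _ _ ξ).hasFDerivAt.hasLineDerivAt _).unique
      (hasLineDerivAt_symbolTerm_single _ _ _ i ξ)]

lemma hasLineDerivAt_chiPlus_cpow_zero_one (b : ℝ) (ξ : EuclideanSpace ℝ (Fin m) × ℝ) :
    HasLineDerivAt ℝ (fun ξ => chiPlus ξ ^ (b : ℂ))
      (b * I * chiPlus ξ ^ ((b - 1 : ℝ) : ℂ)) ξ (0, 1) := by
  obtain ⟨x, y⟩ := ξ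
  have h : HasDerivAt (fun r : ℝ => chiPlus (x, y + r)) I 0 := by
    simpa [chiPlus] using
      (((hasDerivAt_id (0 : ℝ)).const_add y).ofReal_comp.const_mul I).const_add (jap x : ℂ)
  unfold HasLineDerivAt
  simp only [Prod.smul_mk, Prod.mk_add_mk, smul_zero, add_zero, smul_eq_mul, mul_one]
  refine ((hasStrictDerivAt_cpow_const (c := (b : ℂ))
    (by simpa using chiPlus_mem_slitPlane (x, y))).hasDerivAt.comp 0 h).congr_deriv ?_
  rw [add_zero]
  push_cast
  ring

lemma exists_dLine_replicate_zero_one (t : ℝ) (j : ℕ) :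
    ∃ c : ℂ, dLine (List.replicate j ((0 : EuclideanSpace ℝ (Fin m)), (1 : ℝ)))
      (fun ξ => chiPlus ξ ^ (t : ℂ)) = fun ξ => c * chiPlus ξ ^ ((t - j : ℝ) : ℂ) := by
  induction j with
  | zero => exact ⟨1, by simp [dLine]⟩
  | succ j ih =>
    obtain ⟨c, hc⟩ := ih
    refine ⟨c * ((t - j : ℝ) * I), funext fun ξ => ?_⟩
    simp only [List.replicate_succ, dLine, hc]
    rw [Nat.cast_succ, ← sub_sub, fderiv_const_mul (differentiable_chiPlus_cpow _ ξ),
      smul_apply, smul_eq_mul,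
      ((differentiable_chiPlus_cpow _ ξ).hasFDerivAt.hasLineDerivAt _).unique
        (hasLineDerivAt_chiPlus_cpow_zero_one _ ξ)]
    push_cast
    ring

/- Sums of the terms that occur in the `n`-th tangential derivatives of `c χ_+^a`. -/
inductive HasSymbolExpansion (a : ℝ) :
    ℕ → (EuclideanSpace ℝ (Fin m) × ℝ → ℂ) → Prop
  | base (c : ℂ) : HasSymbolExpansion a 0 fun ξ => c * chiPlus ξ ^ (a : ℂ)
  | term {n : ℕ} (c : ℂ) (β : Fin m → ℕ) (s : ℝ) {k : ℕ} (hk : 1 ≤ k)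
      (hβ : ((∑ i, β i : ℕ) : ℝ) + s = k - n) :
      HasSymbolExpansion a n fun ξ => c * symbolTerm β s (a - k) ξ
  | add {n : ℕ} {F G : EuclideanSpace ℝ (Fin m) × ℝ → ℂ} :
      HasSymbolExpansion a n F → HasSymbolExpansion a n G → HasSymbolExpansion a n (F + G)

namespace HasSymbolExpansion

variable {a : ℝ} {n : ℕ} {F : EuclideanSpace ℝ (Fin m) × ℝ → ℂ}

lemma zero (a : ℝ) (n : ℕ) : HasSymbolExpansion (m := m) a n fun _ => 0 := by
  convert term (a := a) (n := n) 0 0 (1 - n) le_rfl (by simp) using 1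
  simp only [zero_mul]

lemma differentiable (h : HasSymbolExpansion a n F) : Differentiable ℝ F := by
  induction h with
  | base c => exact (differentiable_chiPlus_cpow _).const_mul c
  | term c β s => exact (differentiable_symbolTerm _ _ _).const_mul c
  | add _ _ hF hG => exact hF.add hG

lemma fderiv_single (h : HasSymbolExpansion a n F) (i : Fin m) :
    HasSymbolExpansion a (n + 1) fun ξ => fderiv ℝ F ξ (EuclideanSpace.single i 1, 0) := by
  induction h with
  | base c =>
    convert term (n := 1) (c * a) (Function.update 0 i 1) (-1) le_rfl
      (by simp [Function.update_apply]) using 1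
    funext ξ
    simp_rw [← symbolTerm_zero_zero, fderiv_const_mul_symbolTerm_single]
    simp [mul_assoc]
  | @term n c β s k hk hβ =>
    have hsum (v : ℕ) :
        ((∑ j, Function.update β i v j : ℕ) : ℝ) + β i = ∑ j, β j + v :=
      mod_cast Finset.sum_update_add_self β i v
    have hT₁ : HasSymbolExpansion a (n + 1) fun ξ =>
        (c * β i) * symbolTerm (Function.update β i (β i - 1)) s (a - k) ξ := by
      rcases Nat.eq_zero_or_pos (β i) with hi | hi
      · simpa [hi] using zero (m := m) a (n + 1)
      · refine term _ _ _ hk ?_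
        have := hsum (β i - 1)
        push_cast [Nat.cast_sub hi] at hβ this ⊢
        linarith
    have hT₂ : HasSymbolExpansion a (n + 1) fun ξ =>
        (c * s) * symbolTerm (Function.update β i (β i + 1)) (s - 2) (a - k) ξ := by
      refine term _ _ _ hk ?_
      have := hsum (β i + 1)
      push_cast at hβ this ⊢
      linarith
    have hT₃ : HasSymbolExpansion a (n + 1) fun ξ =>
        (c * (a - k)) *
          symbolTerm (Function.update β i (β i + 1)) (s - 1) (a - (k + 1 : ℕ)) ξ := by
      refine term _ _ _ (Nat.le_add_left 1 k) ?_
      have := hsum (β i + 1)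
      push_cast at hβ this ⊢
      linarith
    convert (hT₁.add hT₂).add hT₃ using 1
    funext ξ
    rw [fderiv_const_mul_symbolTerm_single, Nat.cast_succ, ← sub_sub]
    simp only [Pi.add_apply]
    push_cast
    ring
  | add hF hG ihF ihG =>
    convert ihF.add ihG using 1
    funext ξ
    rw [fderiv_add (hF.differentiable ξ) (hG.differentiable ξ)]
    rfl

lemma isBigO (h : HasSymbolExpansion a n F) : F =O[⊤] anisoWeight a n := by
  induction h with
  | base c =>
    exact (isBigO_of_le _ fun ξ => (norm_chiPlus_cpow_le_anisoWeight a ξ).trans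
      (Real.le_norm_self _)).const_mul_left c
  | term c β s hk hβ =>
    exact (isBigO_of_le _ fun ξ => (norm_symbolTerm_le_anisoWeight hk hβ ξ).trans
      (Real.le_norm_self _)).const_mul_left c
  | add _ _ hF hG => exact hF.add hG

lemma dLine_map_single (h : HasSymbolExpansion a n F) (A : List (Fin m)) :
    HasSymbolExpansion a (n + A.length)
      (dLine (A.map fun i => (EuclideanSpace.single i 1, 0)) F) := by
  induction A with
  | nil => exact h
  | cons i A ih => exact ih.fderiv_single i

end HasSymbolExpansion

end OrderReducing

/-- The `ξ'`-multi-index `α'` is encoded as a list `A` of coordinate directions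
(`|α'| = A.length`), and `j = α_n` is the number of `ξ_n`-derivatives. -/
theorem stmt_19_general {m : ℕ} (t : ℝ) (A : List (Fin m)) (j : ℕ) :
    ∃ C : ℝ, 0 < C ∧ ∀ ξ : EuclideanSpace ℝ (Fin m) × ℝ,
      ‖dLine
          (A.map (fun i => ((EuclideanSpace.single i 1 : EuclideanSpace ℝ (Fin m)), (0 : ℝ)))
            ++ List.replicate j ((0 : EuclideanSpace ℝ (Fin m)), (1 : ℝ)))
          (fun η : EuclideanSpace ℝ (Fin m) × ℝ =>
            (((jap η.1 : ℝ) : ℂ) + Complex.I * (η.2 : ℂ)) ^ (t : ℂ))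
          ξ‖
        ≤ C * ((jap ξ.1 ^ (1 - (A.length : ℝ)) + japF ξ ^ (1 - (A.length : ℝ)))
            * japF ξ ^ (t - 1 - (j : ℝ))) := by
  obtain ⟨c, hc⟩ := OrderReducing.exists_dLine_replicate_zero_one (m := m) t j
  have hF := (OrderReducing.HasSymbolExpansion.base (a := t - j) c).dLine_map_single A
  rw [← hc, ← dLine_append_s19, zero_add] at hF
  obtain ⟨C, hC, hbound⟩ := Asymptotics.isBigO_iff'.1 hF.isBigO
  refine ⟨C, hC, fun ξ => ?_⟩
  have := Filter.eventually_top.1 hbound ξ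
  rwa [Real.norm_of_nonneg (OrderReducing.anisoWeight_nonneg _ _ _), OrderReducing.anisoWeight,
    sub_right_comm] at this

/-- The order-reducing symbol `χ_+^t(ξ) = (⟨ξ'⟩+iξ_n)^t` (principal power) on
`ℝⁿ = ℝ^{n-1}×ℝ` (`n = m+1 ≥ 2`) satisfies the anisotropic estimates with `d = 1`,
order `m = t`, regularity number `ν = 1`:
`|∂_{ξ'}^{α'} ∂_{ξ_n}^{α_n} χ_+^t| ≤ C_α (⟨ξ'⟩^{1-|α'|} + ⟨ξ⟩^{1-|α'|}) ⟨ξ⟩^{t-1-α_n}`.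
The `ξ'`-multi-index `α'` is encoded as a list `A` of coordinate directions
(`|α'| = A.length`), and `j = α_n` is the number of `ξ_n`-derivatives. -/
theorem stmt_19 {m : ℕ} (hm : 1 ≤ m) (t : ℝ) (A : List (Fin m)) (j : ℕ) :
    ∃ C : ℝ, 0 < C ∧ ∀ ξ : EuclideanSpace ℝ (Fin m) × ℝ,
      ‖dLine
          (A.map (fun i => ((EuclideanSpace.single i 1 : EuclideanSpace ℝ (Fin m)), (0 : ℝ)))
            ++ List.replicate j ((0 : EuclideanSpace ℝ (Fin m)), (1 : ℝ)))
          (fun η : EuclideanSpace ℝ (Fin m) × ℝ =>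
            (((jap η.1 : ℝ) : ℂ) + Complex.I * (η.2 : ℂ)) ^ (t : ℂ))
          ξ‖
        ≤ C * ((jap ξ.1 ^ (1 - (A.length : ℝ)) + japF ξ ^ (1 - (A.length : ℝ)))
            * japF ξ ^ (t - 1 - (j : ℝ))) :=
  stmt_19_general t A j
end
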